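/- arXiv:2407.05772 — 4 statements merged into one kernel-verified Lean document; each statement's English description precedes it below -/
import Mathlib

section
/- Let (z_j)_{j ∈ ℤ} be a sequence of nonnegative real numbers with Z := ∑_{j ∈ ℤ} z_j < ∞. Then for any ε ∈ (0,1), ∑_{j ∈ ℤ} z_j (∑_{k ≤ j} z_k)^{ε−1} ≤ C_ε Z^ε, where C_ε depends only on ε, and the convention 0·∞ = 0 is used (i.e., terms with z_j = 0 contribute 0 even if the partial sum is 0). -/
open scoped ENNReal

/-! Since `t ↦ t ^ ε` is concave, `z_j S_j ^ (ε - 1) ≤ ε⁻¹ (S_j ^ ε - S_{j-1} ^ ε)` for the partial sums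
`S_j = ∑_{k ≤ j} z_k = S_{j-1} + z_j`; the right-hand side telescopes, and `S_j ^ ε ≤ Z ^ ε`.
So the inequality holds with `C_ε = 1 / ε`. -/

lemma Real.mul_mul_add_rpow_sub_one_le {ε x a : ℝ} (hε : 0 ≤ ε) (hε1 : ε ≤ 1) (hx : 0 ≤ x)
    (ha : 0 ≤ a) : ε * (a * (x + a) ^ (ε - 1)) ≤ (x + a) ^ ε - x ^ ε := by
  rcases ha.eq_or_lt with rfl | ha
  · simp
  set y := x + a
  have hy : 0 < y := by positivity
  have hbernoulli : (x / y) ^ ε ≤ 1 + ε * -(a / y) := by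
    have h := rpow_one_add_le_one_add_mul_self (s := -(a / y))
      (by rw [neg_le_neg_iff, div_le_one hy]; linarith) hε hε1
    rwa [show 1 + -(a / y) = x / y by field_simp; ring] at h
  calc ε * (a * y ^ (ε - 1)) = y ^ ε - (1 + ε * -(a / y)) * y ^ ε := by
        rw [rpow_sub_one hy.ne']; field_simp; ring
    _ ≤ y ^ ε - (x / y) ^ ε * y ^ ε := by gcongr
    _ = y ^ ε - x ^ ε := by rw [div_rpow hx hy.le, div_mul_cancel₀ _ (rpow_pos_of_pos hy ε).ne']

lemma Int.sum_Ioc_sub_sub_one {M : Type*} [AddCommGroup M] (g : ℤ → M) {a b : ℤ} (hab : a ≤ b) :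
    ∑ j ∈ Finset.Ioc a b, (g j - g (j - 1)) = g b - g a := by
  induction b, hab using Int.leInduction with
  | base => simp
  | succ b hab ih =>
    rw [← Finset.insert_Ioc_right_eq_Ioc_add_one hab, Finset.sum_insert (by simp), ih,
      add_sub_cancel_right]
    abel

lemma tsum_ofReal_sub_sub_one_le {g : ℤ → ℝ} {M : ℝ} (hg : Monotone g) (hg0 : ∀ j, 0 ≤ g j)
    (hgM : ∀ j, g j ≤ M) : ∑' j, ENNReal.ofReal (g j - g (j - 1)) ≤ ENNReal.ofReal M := by
  refine ENNReal.summable.tsum_le_of_sum_le fun s => ?_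
  rcases s.eq_empty_or_nonempty with rfl | hs
  · simp
  have hsub : s ⊆ Finset.Ioc (s.min' hs - 1) (s.max' hs) := fun j hj =>
    Finset.mem_Ioc.mpr ⟨by linarith [s.min'_le j hj], s.le_max' j hj⟩
  have hdiff : ∀ j, 0 ≤ g j - g (j - 1) := fun j => sub_nonneg.mpr (hg (by omega))
  calc ∑ j ∈ s, ENNReal.ofReal (g j - g (j - 1))
      ≤ ∑ j ∈ Finset.Ioc (s.min' hs - 1) (s.max' hs), ENNReal.ofReal (g j - g (j - 1)) :=
        Finset.sum_le_sum_of_subset hsub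
    _ = ENNReal.ofReal (g (s.max' hs) - g (s.min' hs - 1)) := by
        rw [← ENNReal.ofReal_sum_of_nonneg fun j _ => hdiff j,
          Int.sum_Ioc_sub_sub_one g (by linarith [s.min'_le_max' hs])]
    _ ≤ ENNReal.ofReal M :=
        ENNReal.ofReal_le_ofReal (by linarith [hgM (s.max' hs), hg0 (s.min' hs - 1)])

lemma Summable.tsum_Iic_eq_tsum_Iic_sub_one_add {α : Type*} [AddCommGroup α] [UniformSpace α]
    [IsUniformAddGroup α] [CompleteSpace α] [T2Space α] {f : ℤ → α} (hf : Summable f) (j : ℤ) :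
    ∑' k : {k : ℤ // k ≤ j}, f k = ∑' k : {k : ℤ // k ≤ j - 1}, f k + f j := by
  have hd : Disjoint (Set.Iio j) {j} := Set.disjoint_singleton_right.mpr Set.self_notMem_Iio
  have h := (hf.subtype _).tsum_union_disjoint hd (hf.subtype _)
  rwa [Set.Iio_union_right, tsum_singleton, ← Set.Iic_sub_one_eq_Iio] at h

theorem stmt1 (ε : ℝ) (hε : 0 < ε) (hε1 : ε < 1) :
    ∃ C : ℝ, 0 < C ∧ ∀ z : ℤ → ℝ, (∀ j, 0 ≤ z j) → Summable z →
      ∑' j : ℤ, ENNReal.ofReal (z j * (∑' k : {k : ℤ // k ≤ j}, z k) ^ (ε - 1)) ≤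
        ENNReal.ofReal (C * (∑' j, z j) ^ ε) := by
  refine ⟨1 / ε, by positivity, fun z hz hsum => ?_⟩
  set S : ℤ → ℝ := fun j => ∑' k : {k : ℤ // k ≤ j}, z k
  have hS0 : ∀ j, 0 ≤ S j := fun j => tsum_nonneg fun k => hz k
  have hstep : ∀ j, S j = S (j - 1) + z j := hsum.tsum_Iic_eq_tsum_Iic_sub_one_add
  have hmono : Monotone S := monotone_int_of_le_succ fun j => by
    rw [hstep (j + 1), add_sub_cancel_right]; linarith [hz (j + 1)]
  have hpoint : ∀ j, z j * S j ^ (ε - 1) ≤ 1 / ε * S j ^ ε - 1 / ε * S (j - 1) ^ ε := fun j => by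
    rw [← mul_sub, one_div, le_inv_mul_iff₀ hε, hstep j]
    exact Real.mul_mul_add_rpow_sub_one_le hε.le hε1.le (hS0 _) (hz j)
  have hSZ : ∀ j, S j ≤ ∑' j, z j := fun j => hsum.tsum_subtype_le z (Set.Iic j) hz
  calc ∑' j, ENNReal.ofReal (z j * S j ^ (ε - 1))
      ≤ ∑' j, ENNReal.ofReal (1 / ε * S j ^ ε - 1 / ε * S (j - 1) ^ ε) :=
        ENNReal.tsum_le_tsum fun j => ENNReal.ofReal_le_ofReal (hpoint j)
    _ ≤ ENNReal.ofReal (1 / ε * (∑' j, z j) ^ ε) :=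
        tsum_ofReal_sub_sub_one_le (fun i j hij => by gcongr; exacts [hS0 i, hmono hij])
          (fun j => mul_nonneg (by positivity) (Real.rpow_nonneg (hS0 j) ε))
          (fun j => by gcongr; exacts [hS0 j, hSZ j])
end

section
/- Let d ≥ 1, m_2 > 0, and let A ⊂ ℝ^d be quasi-uniformly distributed with geometric constants c_0, C_1. Suppose functions ψ_α : ℝ^d → ℝ satisfy |ψ_α(x)| ≤ C_0 (1 + ‖x − α‖)^{−d−m_2} for all x ∈ ℝ^d and α ∈ A. Then for every a with 0 ≤ a < m_2 and every h ∈ (0,1), sup_{x ∈ ℝ^d} ∑_{α ∈ A} |ψ_α(x/h)| (‖x − αh‖ + h)^a ≤ C_a h^a, where C_a depends only on a, d, C_0 and the geometric constants of A. -/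
open MeasureTheory Metric
open scoped ENNReal

/-- A countable set `A ⊆ ℝ^d` is quasi-uniformly distributed with geometric constants
`c₀, C₁`. -/
def QuasiUniform {d : ℕ} (A : Set (EuclideanSpace ℝ (Fin d))) (c₀ C₁ : ℝ) : Prop :=
  A.Countable ∧ (∀ x, ∃ α ∈ A, dist x α ≤ c₀) ∧
    ∀ x : EuclideanSpace ℝ (Fin d),
      {α ∈ A | dist x α ≤ c₀}.Finite ∧ ({α ∈ A | dist x α ≤ c₀}.ncard : ℝ) ≤ C₁

/-!
Writing `y = x / h`, one has `‖x - h α‖ + h = h (1 + ‖y - α‖)`, so each term is at most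
`C₀ hᵃ (1 + ‖y - α‖)^{-s}` with `s = d + m₂ - a > d`, and it remains to bound
`∑_{α ∈ A} (1 + ‖y - α‖)^{-s}` uniformly in `y`. Since `1 + ‖y - α‖` changes by at most the factor
`1 + c₀` on the ball `B_{c₀}(α)`, each term is dominated by the average of `(1 + ‖y - z‖)^{-s}` over
that ball; as these balls overlap at most `C₁` times, the sum is at most
`C₁ (1 + c₀)^s / |B_{c₀}| · ∫ (1 + ‖z‖)^{-s} dz`, which is finite because `s > d`. The ball
`B_{c₀}` has positive volume since a countable set cannot cover `ℝ^d`, `d ≥ 1`, with radius `0`.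
-/

section PseudoMetric

variable {X : Type*} [PseudoMetricSpace X]

theorem one_add_dist_rpow_neg_le {s c : ℝ} (hs : 0 ≤ s) (hc : 0 ≤ c) {y z α : X}
    (hz : dist z α ≤ c) : (1 + dist y α) ^ (-s) ≤ (1 + c) ^ s * (1 + dist z y) ^ (-s) := by
  have hzy : 1 + dist z y ≤ (1 + c) * (1 + dist y α) := by
    nlinarith [dist_triangle z α y, dist_comm α y, mul_nonneg hc (dist_nonneg (x := y) (y := α))]
  calc (1 + dist y α) ^ (-s) = (1 + c) ^ s * ((1 + c) * (1 + dist y α)) ^ (-s) := by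
        rw [Real.mul_rpow (by positivity) (by positivity), ← mul_assoc,
          ← Real.rpow_add (by positivity), add_neg_cancel, Real.rpow_zero, one_mul]
    _ ≤ (1 + c) ^ s * (1 + dist z y) ^ (-s) := by
        refine mul_le_mul_of_nonneg_left ?_ (by positivity)
        exact Real.rpow_le_rpow_of_nonpos (by positivity) hzy (by linarith)

theorem tsum_indicator_closedBall_le {A : Set X} {c₀ C₁ : ℝ}
    (hmult : ∀ z : X, {α ∈ A | dist z α ≤ c₀}.Finite ∧ ({α ∈ A | dist z α ≤ c₀}.ncard : ℝ) ≤ C₁)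
    (z : X) : ∑' α : A, (closedBall (α : X) c₀).indicator 1 z ≤ ENNReal.ofReal C₁ := by
  have hind : ∀ α : X, A.indicator (fun β => (closedBall β c₀).indicator (1 : X → ℝ≥0∞) z) α
      = {α ∈ A | dist z α ≤ c₀}.indicator 1 α := by
    intro α
    by_cases hα : α ∈ A <;> by_cases hz : dist z α ≤ c₀ <;>
      simp [hα, hz, Set.indicator, mem_closedBall]
  rw [tsum_subtype A (fun β => (closedBall β c₀).indicator (1 : X → ℝ≥0∞) z)]
  simp_rw [hind]
  rw [← tsum_subtype]
  simp only [Pi.one_apply]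
  rw [ENNReal.tsum_set_one, ← (hmult z).1.cast_ncard_eq, ENat.toENNReal_coe,
    ← ENNReal.ofReal_natCast]
  exact ENNReal.ofReal_le_ofReal (hmult z).2

end PseudoMetric

section HaarMeasure

variable {E : Type*} [NormedAddCommGroup E] [MeasurableSpace E] [BorelSpace E]
  (μ : Measure E) [μ.IsAddHaarMeasure]

theorem measure_closedBall_mul_tsum_one_add_dist_rpow_neg_le {A : Set E} (hA : A.Countable)
    {c₀ C₁ s : ℝ} (hc₀ : 0 ≤ c₀) (hs : 0 ≤ s)
    (hmult : ∀ z : E, {α ∈ A | dist z α ≤ c₀}.Finite ∧ ({α ∈ A | dist z α ≤ c₀}.ncard : ℝ) ≤ C₁)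
    (y : E) :
    μ (closedBall 0 c₀) * ∑' α : A, ENNReal.ofReal ((1 + dist y α) ^ (-s)) ≤
      ENNReal.ofReal (C₁ * (1 + c₀) ^ s) * ∫⁻ z, ENNReal.ofReal ((1 + ‖z‖) ^ (-s)) ∂μ := by
  have : Countable A := hA.to_subtype
  have hC₁ : 0 ≤ C₁ := (Nat.cast_nonneg _).trans (hmult y).2
  set g : E → ℝ≥0∞ := fun z => ENNReal.ofReal ((1 + dist z y) ^ (-s)) with hg_def
  have hg : Measurable g := by fun_prop
  have hterm : ∀ α : A, μ (closedBall 0 c₀) * ENNReal.ofReal ((1 + dist y α) ^ (-s)) ≤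
      ENNReal.ofReal ((1 + c₀) ^ s) * ∫⁻ z in closedBall (α : E) c₀, g z ∂μ := by
    intro α
    rw [← Measure.addHaar_closedBall_center μ α, mul_comm, ← setLIntegral_const,
      ← lintegral_const_mul _ hg]
    refine setLIntegral_mono (by fun_prop) fun z hz => ?_
    rw [← ENNReal.ofReal_mul (by positivity)]
    exact ENNReal.ofReal_le_ofReal (one_add_dist_rpow_neg_le hs hc₀ hz)
  calc μ (closedBall 0 c₀) * ∑' α : A, ENNReal.ofReal ((1 + dist y α) ^ (-s))
      ≤ ∑' α : A, ENNReal.ofReal ((1 + c₀) ^ s) * ∫⁻ z in closedBall (α : E) c₀, g z ∂μ := by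
        rw [← ENNReal.tsum_mul_left]
        exact ENNReal.tsum_le_tsum hterm
    _ = ENNReal.ofReal ((1 + c₀) ^ s) *
          ∫⁻ z, (∑' α : A, (closedBall (α : E) c₀).indicator 1 z) * g z ∂μ := by
        simp_rw [← ENNReal.tsum_mul_right, ← Set.indicator_mul_left, Pi.one_apply, one_mul]
        rw [ENNReal.tsum_mul_left,
          lintegral_tsum fun α => (hg.indicator measurableSet_closedBall).aemeasurable]
        simp_rw [lintegral_indicator measurableSet_closedBall]
    _ ≤ ENNReal.ofReal ((1 + c₀) ^ s) * ∫⁻ z, ENNReal.ofReal C₁ * g z ∂μ := by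
        gcongr with z
        exact tsum_indicator_closedBall_le hmult z
    _ = ENNReal.ofReal (C₁ * (1 + c₀) ^ s) * ∫⁻ z, ENNReal.ofReal ((1 + ‖z‖) ^ (-s)) ∂μ := by
        rw [lintegral_const_mul _ hg, ← mul_assoc, ← ENNReal.ofReal_mul (by positivity),
          mul_comm ((1 + c₀) ^ s)]
        simp_rw [hg_def, dist_eq_norm]
        rw [lintegral_sub_right_eq_self (fun z => ENNReal.ofReal ((1 + ‖z‖) ^ (-s))) y]

theorem tsum_one_add_dist_rpow_neg_le [ProperSpace E] {A : Set E} (hA : A.Countable)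
    {c₀ C₁ s : ℝ} (hc₀ : 0 < c₀) (hs : 0 ≤ s)
    (hmult : ∀ z : E, {α ∈ A | dist z α ≤ c₀}.Finite ∧ ({α ∈ A | dist z α ≤ c₀}.ncard : ℝ) ≤ C₁)
    (y : E) :
    ∑' α : A, ENNReal.ofReal ((1 + dist y α) ^ (-s)) ≤
      ENNReal.ofReal (C₁ * (1 + c₀) ^ s) / μ (closedBall 0 c₀) *
        ∫⁻ z, ENNReal.ofReal ((1 + ‖z‖) ^ (-s)) ∂μ := by
  rw [← ENNReal.mul_div_right_comm, ENNReal.le_div_iff_mul_le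
    (.inl (measure_closedBall_pos μ 0 hc₀).ne') (.inl measure_closedBall_lt_top.ne), mul_comm]
  exact measure_closedBall_mul_tsum_one_add_dist_rpow_neg_le μ hA hc₀.le hs hmult y

end HaarMeasure

section NormedSpace

variable {E : Type*} [NormedAddCommGroup E] [NormedSpace ℝ E]

theorem pos_of_countable_of_forall_exists_dist_le [Nontrivial E] {A : Set E} {c₀ : ℝ}
    (hA : A.Countable) (hcover : ∀ x, ∃ α ∈ A, dist x α ≤ c₀) : 0 < c₀ := by
  by_contra! hc₀
  have hA_univ : A = Set.univ := Set.eq_univ_of_forall fun x => by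
    obtain ⟨α, hα, hxα⟩ := hcover x
    rwa [dist_le_zero.mp (hxα.trans hc₀)]
  obtain ⟨v, hv⟩ := exists_ne (0 : E)
  have : Countable E := Set.countable_univ_iff.mp (hA_univ ▸ hA)
  exact not_countable (smul_left_injective ℝ hv).countable

theorem norm_sub_smul_add_eq {h : ℝ} (hh : 0 < h) (x α : E) :
    ‖x - h • α‖ + h = h * (1 + dist (h⁻¹ • x) α) := by
  rw [dist_eq_norm, show x - h • α = h • (h⁻¹ • x - α) by rw [smul_sub, smul_inv_smul₀ hh.ne'],
    norm_smul, Real.norm_of_nonneg hh.le]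
  ring

theorem abs_mul_norm_sub_smul_add_rpow_le {C₀ r a h u : ℝ} (hh : 0 < h) (x α : E)
    (hu : |u| ≤ C₀ * (1 + ‖h⁻¹ • x - α‖) ^ (-r)) :
    |u| * (‖x - h • α‖ + h) ^ a ≤ |C₀| * h ^ a * (1 + dist (h⁻¹ • x) α) ^ (-(r - a)) := by
  rw [← dist_eq_norm] at hu
  calc |u| * (‖x - h • α‖ + h) ^ a
      ≤ |C₀| * (1 + dist (h⁻¹ • x) α) ^ (-r) * (h ^ a * (1 + dist (h⁻¹ • x) α) ^ a) := by
        rw [norm_sub_smul_add_eq hh, Real.mul_rpow hh.le (by positivity)]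
        gcongr
        exact hu.trans (by gcongr; exact le_abs_self C₀)
    _ = |C₀| * h ^ a * (1 + dist (h⁻¹ • x) α) ^ (-(r - a)) := by
        rw [neg_sub, sub_eq_neg_add, Real.rpow_add (by positivity)]
        ring

end NormedSpace

theorem stmt3_general (d : ℕ) (hd : 0 < d) (m₂ : ℝ) (c₀ C₁ C₀ : ℝ) (a : ℝ)
    (ham : a < m₂) :
    ∃ C : ℝ, 0 < C ∧
      ∀ A : Set (EuclideanSpace ℝ (Fin d)), QuasiUniform A c₀ C₁ →
      ∀ ψ : EuclideanSpace ℝ (Fin d) → EuclideanSpace ℝ (Fin d) → ℝ,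
        (∀ α ∈ A, ∀ x, |ψ α x| ≤ C₀ * (1 + ‖x - α‖) ^ (-(d : ℝ) - m₂)) →
      ∀ h : ℝ, 0 < h → h < 1 →
      ∀ x : EuclideanSpace ℝ (Fin d),
        ∑' α : A, ENNReal.ofReal
            (|ψ α (h⁻¹ • x)| * (‖x - h • (α : EuclideanSpace ℝ (Fin d))‖ + h) ^ a)
          ≤ ENNReal.ofReal (C * h ^ a) := by
  have : Nonempty (Fin d) := Fin.pos_iff_nonempty.mp hd
  have hs : (d : ℝ) < d + m₂ - a := by linarith
  set K : ℝ≥0∞ := ENNReal.ofReal (C₁ * (1 + c₀) ^ (d + m₂ - a)) /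
    volume (closedBall (0 : EuclideanSpace ℝ (Fin d)) c₀) *
      ∫⁻ z : EuclideanSpace ℝ (Fin d), ENNReal.ofReal ((1 + ‖z‖) ^ (-(d + m₂ - a)))
  refine ⟨|C₀| * K.toReal + 1, by positivity, ?_⟩
  rintro A ⟨hcount, hcover, hmult⟩ ψ hψ h hh - x
  have hc₀ : 0 < c₀ := pos_of_countable_of_forall_exists_dist_le hcount hcover
  have hK : K ≠ ⊤ := ENNReal.mul_ne_top
    (ENNReal.div_ne_top ENNReal.ofReal_ne_top (measure_closedBall_pos _ _ hc₀).ne')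
    (finite_integral_one_add_norm (by rwa [finrank_euclideanSpace_fin])).ne
  calc _ ≤ ENNReal.ofReal (|C₀| * h ^ a) *
          ∑' α : A, ENNReal.ofReal ((1 + dist (h⁻¹ • x) α.1) ^ (-(d + m₂ - a))) := by
        rw [← ENNReal.tsum_mul_left]
        refine ENNReal.tsum_le_tsum fun α => ?_
        rw [← ENNReal.ofReal_mul (by positivity)]
        refine ENNReal.ofReal_le_ofReal (abs_mul_norm_sub_smul_add_rpow_le hh x α ?_)
        rw [neg_add']
        exact hψ α α.2 _
    _ ≤ ENNReal.ofReal (|C₀| * h ^ a) * K := by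
        gcongr
        exact tsum_one_add_dist_rpow_neg_le volume hcount hc₀ (by linarith) hmult _
    _ ≤ ENNReal.ofReal ((|C₀| * K.toReal + 1) * h ^ a) := by
        rw [← ENNReal.ofReal_toReal hK, ← ENNReal.ofReal_mul (by positivity),
          ENNReal.toReal_ofReal ENNReal.toReal_nonneg, add_mul, one_mul, mul_right_comm]
        exact ENNReal.ofReal_le_ofReal (le_add_of_nonneg_right (by positivity))

theorem stmt3 (d : ℕ) (hd : 0 < d) (m₂ : ℝ) (hm : 0 < m₂) (c₀ C₁ C₀ : ℝ) (a : ℝ)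
    (ha : 0 ≤ a) (ham : a < m₂) :
    ∃ C : ℝ, 0 < C ∧
      ∀ A : Set (EuclideanSpace ℝ (Fin d)), QuasiUniform A c₀ C₁ →
      ∀ ψ : EuclideanSpace ℝ (Fin d) → EuclideanSpace ℝ (Fin d) → ℝ,
        (∀ α ∈ A, ∀ x, |ψ α x| ≤ C₀ * (1 + ‖x - α‖) ^ (-(d : ℝ) - m₂)) →
      ∀ h : ℝ, 0 < h → h < 1 →
      ∀ x : EuclideanSpace ℝ (Fin d),
        ∑' α : A, ENNReal.ofReal
            (|ψ α (h⁻¹ • x)| * (‖x - h • (α : EuclideanSpace ℝ (Fin d))‖ + h) ^ a)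
          ≤ ENNReal.ofReal (C * h ^ a) :=
  stmt3_general d hd m₂ c₀ C₁ C₀ a ham
end

section
/- Let d ≥ 1, a ≥ 0, 1 ≤ p < ∞, and let f ∈ L^p(ℝ^d) satisfy sup_{M ≥ 1} M^a (∫_{‖x‖ ≥ M} |f(x)|^p dx)^{1/p} ≤ C_1 < ∞. Let A ⊂ ℝ^d be quasi-uniformly distributed and let S_α be linear functionals with |S_α g| ≤ C ∫_{B_1(α)} |g(y)| dy. Then for h ∈ (0,1) and n ∈ ℕ with n^{1/d} h ≥ 2, h^d ∑_{α ∈ A, ‖α‖ ≥ n^{1/d}} |S_α(σ_h f)|^p ≤ C' C_1^p (n^{1/d} h)^{−ap}, where σ_h f(·) = f(h·) and C' depends only on C, p, d, a and the geometric constants of A. -/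
/-!
By the bound on `S α` and Hölder's inequality on the unit ball, `|S α (σ_h f)|^p` is at most a
constant times `∫_{B(α,1)} |f(h y)|^p dy = h^{-d} ∫_{B(hα,h)} |f|^p`. Quasi-uniformity bounds the
number of points of `A` in any unit ball (the balls `B(α, c₀)` around them overlap at most `C₁`
times and fit in a ball of radius `1 + c₀`), so the balls `B(hα, h)` overlap boundedly. For
`‖α‖ ≥ n^{1/d}` they lie in `{‖y‖ ≥ n^{1/d} h / 2}`, where the decay hypothesis on `f` applies.
-/

open MeasureTheory Metric
open scoped ENNReal

open Set Module
open scoped Pointwise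

theorem tsum_indicator_one_eq_encard {X ι : Type*} (s : ι → Set X) (x : X) :
    ∑' i, (s i).indicator (1 : X → ℝ≥0∞) x = {i | x ∈ s i}.encard := by
  have hind : ∀ i, (s i).indicator (1 : X → ℝ≥0∞) x = {i | x ∈ s i}.indicator 1 i := by
    intro i
    by_cases hx : x ∈ s i <;> simp [hx]
  rw [tsum_congr hind, ← tsum_subtype]
  exact ENNReal.tsum_set_one _

section

variable {X : Type*} [MeasurableSpace X] {μ : Measure X}

theorem tsum_setLIntegral_le_of_encard_le {ι : Type*} [Countable ι] {s : ι → Set X}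
    (hs : ∀ i, MeasurableSet (s i)) {T : Set X} (hT : MeasurableSet T) (hsT : ∀ i, s i ⊆ T)
    {K : ℝ≥0∞} (hK : ∀ x, {i | x ∈ s i}.encard ≤ K) {F : X → ℝ≥0∞} (hF : AEMeasurable F μ) :
    ∑' i, ∫⁻ x in s i, F x ∂μ ≤ K * ∫⁻ x in T, F x ∂μ := by
  have hpt : ∀ x, ∑' i, (s i).indicator F x ≤ K * T.indicator F x := by
    intro x
    by_cases hx : x ∈ T
    · calc ∑' i, (s i).indicator F x = F x * ∑' i, (s i).indicator 1 x := by
            rw [← ENNReal.tsum_mul_left]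
            exact tsum_congr fun i => by by_cases hxs : x ∈ s i <;> simp [hxs]
        _ ≤ F x * K := by
            gcongr
            exact (tsum_indicator_one_eq_encard s x).trans_le (by exact_mod_cast hK x)
        _ = K * T.indicator F x := by rw [indicator_of_mem hx, mul_comm]
    · have hzero : ∀ i, (s i).indicator F x = 0 := fun i =>
        indicator_of_notMem (fun hxs => hx (hsT i hxs)) F
      simp [hzero]
  calc ∑' i, ∫⁻ x in s i, F x ∂μ = ∫⁻ x, ∑' i, (s i).indicator F x ∂μ := by
        rw [lintegral_tsum fun i => hF.indicator (hs i)]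
        exact tsum_congr fun i => (lintegral_indicator (hs i) F).symm
    _ ≤ ∫⁻ x, K * T.indicator F x ∂μ := lintegral_mono hpt
    _ = K * ∫⁻ x in T, F x ∂μ := by
        rw [lintegral_const_mul'' K (hF.indicator hT), lintegral_indicator hT]

theorem lintegral_rpow_le_measure_univ_rpow_mul {f : X → ℝ≥0∞}
    (hf : AEMeasurable f μ) {p : ℝ} (hp : 1 ≤ p) :
    (∫⁻ x, f x ∂μ) ^ p ≤ μ univ ^ (p - 1) * ∫⁻ x, f x ^ p ∂μ := by
  have hp0 : 0 < p := zero_lt_one.trans_le hp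
  have hHolder := eLpNorm'_le_eLpNorm'_mul_rpow_measure_univ one_pos hp hf.aestronglyMeasurable
  simp only [eLpNorm', enorm_eq_self, ENNReal.rpow_one, div_one] at hHolder
  calc (∫⁻ x, f x ∂μ) ^ p
      ≤ ((∫⁻ x, f x ^ p ∂μ) ^ (1 / p) * μ univ ^ (1 - 1 / p)) ^ p := by gcongr
    _ = μ univ ^ (p - 1) * ∫⁻ x, f x ^ p ∂μ := by
        rw [ENNReal.mul_rpow_of_nonneg _ _ hp0.le, ← ENNReal.rpow_mul, ← ENNReal.rpow_mul,
          one_div_mul_cancel hp0.ne', ENNReal.rpow_one, mul_comm]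
        congr 2
        field_simp

theorem ofReal_setIntegral_abs_rpow_le {s : Set X} {g : X → ℝ}
    (hg : IntegrableOn g s μ) {p : ℝ} (hp : 1 ≤ p) :
    ENNReal.ofReal ((∫ y in s, |g y| ∂μ) ^ p)
      ≤ μ s ^ (p - 1) * ∫⁻ y in s, ENNReal.ofReal (|g y| ^ p) ∂μ := by
  have hp0 : 0 ≤ p := zero_le_one.trans hp
  have hrpow : ∀ y, ENNReal.ofReal (|g y| ^ p) = ENNReal.ofReal |g y| ^ p := fun y =>
    (ENNReal.ofReal_rpow_of_nonneg (abs_nonneg _) hp0).symm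
  rw [← ENNReal.ofReal_rpow_of_nonneg (integral_nonneg fun y => abs_nonneg _) hp0,
    ofReal_integral_eq_lintegral_ofReal hg.abs (ae_of_all _ fun y => abs_nonneg _),
    lintegral_congr hrpow, ← Measure.restrict_apply_univ]
  exact lintegral_rpow_le_measure_univ_rpow_mul hg.aemeasurable.abs.ennreal_ofReal hp

theorem ofReal_abs_rpow_le_of_abs_le_mul_setIntegral {s : Set X} {g : X → ℝ}
    (hg : IntegrableOn g s μ) {p C t : ℝ} (hp : 1 ≤ p) (hC : 0 ≤ C)
    (ht : |t| ≤ C * ∫ y in s, |g y| ∂μ) :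
    ENNReal.ofReal (|t| ^ p)
      ≤ ENNReal.ofReal (C ^ p) * μ s ^ (p - 1) * ∫⁻ y in s, ENNReal.ofReal (|g y| ^ p) ∂μ := by
  have hp0 : 0 ≤ p := zero_le_one.trans hp
  calc ENNReal.ofReal (|t| ^ p)
      ≤ ENNReal.ofReal ((C * ∫ y in s, |g y| ∂μ) ^ p) :=
        ENNReal.ofReal_le_ofReal (Real.rpow_le_rpow (abs_nonneg t) ht hp0)
    _ = ENNReal.ofReal (C ^ p) * ENNReal.ofReal ((∫ y in s, |g y| ∂μ) ^ p) := by
        rw [Real.mul_rpow hC (integral_nonneg fun y => abs_nonneg _),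
          ENNReal.ofReal_mul (Real.rpow_nonneg hC p)]
    _ ≤ ENNReal.ofReal (C ^ p) * (μ s ^ (p - 1) * ∫⁻ y in s, ENNReal.ofReal (|g y| ^ p) ∂μ) := by
        gcongr
        exact ofReal_setIntegral_abs_rpow_le hg hp
    _ = _ := (mul_assoc _ _ _).symm

end

theorem setLIntegral_comp_smul {E : Type*} [NormedAddCommGroup E] [NormedSpace ℝ E]
    [MeasurableSpace E] [BorelSpace E] [FiniteDimensional ℝ E] (μ : Measure E) [μ.IsAddHaarMeasure]
    (F : E → ℝ≥0∞) {h : ℝ} (hh : h ≠ 0) (s : Set E) :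
    ∫⁻ y in s, F (h • y) ∂μ = ENNReal.ofReal |(h ^ finrank ℝ E)⁻¹| * ∫⁻ z in h • s, F z ∂μ := by
  have hmp : MeasurePreserving (h • · : E → E) μ (μ.map (h • ·)) :=
    (measurable_const_smul h).measurePreserving μ
  have hpre : (h • · : E → E) ⁻¹' (h • s) = s := by
    rw [preimage_smul₀ hh, inv_smul_smul₀ hh]
  have hcomp := hmp.setLIntegral_comp_preimage_emb (measurableEmbedding_const_smul₀ hh) F (h • s)
  rw [hpre] at hcomp
  rw [hcomp, Measure.map_addHaar_smul μ hh, Measure.restrict_smul, lintegral_smul_measure,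
    smul_eq_mul]

theorem closedBall_smul_subset_setOf_le_norm {E : Type*} [NormedAddCommGroup E]
    [NormedSpace ℝ E] {h R : ℝ} (hh : 0 < h) (hR : 2 ≤ R) {β : E} (hβ : R ≤ ‖β‖) :
    closedBall (h • β) h ⊆ {z | R * h / 2 ≤ ‖z‖} := by
  intro z hz
  have hnorm : h * R ≤ ‖h • β‖ := by
    rw [norm_smul, Real.norm_of_nonneg hh.le]
    exact mul_le_mul_of_nonneg_left hβ hh.le
  have htri : ‖h • β‖ ≤ ‖z‖ + dist z (h • β) := by
    simpa [dist_comm, dist_zero_left] using dist_triangle (0 : E) z (h • β)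
  have : R * h / 2 ≥ h := by nlinarith
  show R * h / 2 ≤ ‖z‖
  nlinarith [mem_closedBall.1 hz]

noncomputable def unitBallCountBound (d : ℕ) (c₀ C₁ : ℝ) : ℝ :=
  C₁ * volume.real (closedBall (0 : EuclideanSpace ℝ (Fin d)) (1 + c₀)) /
    volume.real (closedBall (0 : EuclideanSpace ℝ (Fin d)) c₀)

namespace QuasiUniform

variable {d : ℕ} {A : Set (EuclideanSpace ℝ (Fin d))} {c₀ C₁ : ℝ}

theorem countable (hA : QuasiUniform A c₀ C₁) : A.Countable := hA.1

theorem encard_le (hA : QuasiUniform A c₀ C₁) (x : EuclideanSpace ℝ (Fin d)) :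
    ({α ∈ A | dist x α ≤ c₀}.encard : ℝ≥0∞) ≤ ENNReal.ofReal C₁ := by
  obtain ⟨hfin, hcard⟩ := hA.2.2 x
  rw [← hfin.cast_ncard_eq, ENat.toENNReal_coe, ← ENNReal.ofReal_natCast]
  exact ENNReal.ofReal_le_ofReal hcard

theorem radius_pos (hA : QuasiUniform A c₀ C₁) (hd : 0 < d) : 0 < c₀ := by
  by_contra! hc₀
  have : NeZero d := ⟨hd.ne'⟩
  have hA_univ : A = univ := eq_univ_of_forall fun x => by
    obtain ⟨α, hα, hxα⟩ := hA.2.1 x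
    rwa [dist_le_zero.1 (hxα.trans hc₀)]
  have hnull := hA.countable.measure_zero (volume : Measure (EuclideanSpace ℝ (Fin d)))
  rw [hA_univ] at hnull
  exact (Measure.measure_univ_pos.2 (NeZero.ne volume)).ne' hnull

theorem encard_mul_volume_le (hA : QuasiUniform A c₀ C₁) (x : EuclideanSpace ℝ (Fin d))
    (r : ℝ) :
    ({α ∈ A | dist x α ≤ r}.encard : ℝ≥0∞) * volume (closedBall (0 : EuclideanSpace ℝ (Fin d)) c₀)
      ≤ ENNReal.ofReal C₁ * volume (closedBall (0 : EuclideanSpace ℝ (Fin d)) (r + c₀)) := by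
  set B := {α ∈ A | dist x α ≤ r}
  have : Countable B := (hA.countable.mono (sep_subset _ _)).to_subtype
  have hsub : ∀ α : B, closedBall (α : EuclideanSpace ℝ (Fin d)) c₀ ⊆ closedBall x (r + c₀) :=
    fun α z hz => by
      rw [mem_closedBall] at hz ⊢
      linarith [dist_triangle z α x, dist_comm x (α : EuclideanSpace ℝ (Fin d)), α.2.2]
  have hoverlap : ∀ z, {α : B | z ∈ closedBall (α : EuclideanSpace ℝ (Fin d)) c₀}.encard
      ≤ ENNReal.ofReal C₁ := fun z => by
    refine le_trans ?_ (hA.encard_le z)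
    have hmaps : MapsTo Subtype.val {α : B | z ∈ closedBall (α : EuclideanSpace ℝ (Fin d)) c₀}
        {α ∈ A | dist z α ≤ c₀} := fun α hα => ⟨α.2.1, mem_closedBall.1 hα⟩
    exact_mod_cast encard_le_encard_of_injOn hmaps Subtype.val_injective.injOn
  have hsum := tsum_setLIntegral_le_of_encard_le (fun _ => measurableSet_closedBall)
    measurableSet_closedBall hsub hoverlap (aemeasurable_const (b := (1 : ℝ≥0∞)) (μ := volume))
  simpa only [setLIntegral_one, Measure.addHaar_closedBall_center, ENNReal.tsum_set_const]
    using hsum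

theorem encard_closedBall_one_le (hA : QuasiUniform A c₀ C₁) (hd : 0 < d)
    (x : EuclideanSpace ℝ (Fin d)) :
    ({α ∈ A | dist x α ≤ 1}.encard : ℝ≥0∞) ≤ ENNReal.ofReal (unitBallCountBound d c₀ C₁) := by
  have hv0 : volume (closedBall (0 : EuclideanSpace ℝ (Fin d)) c₀) ≠ 0 :=
    (measure_closedBall_pos volume 0 (hA.radius_pos hd)).ne'
  have hC₁ : 0 ≤ C₁ := (Nat.cast_nonneg _).trans (hA.2.2 x).2
  rw [unitBallCountBound, Measure.real, Measure.real, ENNReal.ofReal_div_of_pos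
    (ENNReal.toReal_pos hv0 measure_closedBall_lt_top.ne), ENNReal.ofReal_mul hC₁,
    ENNReal.ofReal_toReal measure_closedBall_lt_top.ne,
    ENNReal.ofReal_toReal measure_closedBall_lt_top.ne,
    ENNReal.le_div_iff_mul_le (Or.inl hv0) (Or.inl measure_closedBall_lt_top.ne)]
  exact hA.encard_mul_volume_le x 1

theorem tsum_rpow_le (hA : QuasiUniform A c₀ C₁) (hd : 0 < d) {p C : ℝ} (hp : 1 ≤ p)
    (hC : 0 ≤ C) {S : EuclideanSpace ℝ (Fin d) → (EuclideanSpace ℝ (Fin d) → ℝ) → ℝ}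
    (hS : ∀ α ∈ A, ∀ g : EuclideanSpace ℝ (Fin d) → ℝ, IntegrableOn g (closedBall α 1) →
      |S α g| ≤ C * ∫ y in closedBall α 1, |g y|)
    {f : EuclideanSpace ℝ (Fin d) → ℝ} (hf : MemLp f (ENNReal.ofReal p) volume)
    {h R : ℝ} (hh : 0 < h) (hR : 2 ≤ R) :
    ENNReal.ofReal (h ^ (d : ℝ)) *
        ∑' α : {α : EuclideanSpace ℝ (Fin d) // α ∈ A ∧ R ≤ ‖α‖},
          ENNReal.ofReal (|S α (fun y => f (h • y))| ^ p)
      ≤ ENNReal.ofReal (C ^ p) * volume (closedBall (0 : EuclideanSpace ℝ (Fin d)) 1) ^ (p - 1) *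
          ENNReal.ofReal (unitBallCountBound d c₀ C₁) *
          ∫⁻ z in {z | R * h / 2 ≤ ‖z‖}, ENNReal.ofReal (|f z| ^ p) := by
  set F : EuclideanSpace ℝ (Fin d) → ℝ≥0∞ := fun z => ENNReal.ofReal (|f z| ^ p)
  set c := ENNReal.ofReal (C ^ p) * volume (closedBall (0 : EuclideanSpace ℝ (Fin d)) 1) ^ (p - 1)
  set J := fun α : EuclideanSpace ℝ (Fin d) => ∫⁻ z in closedBall (h • α) h, F z
  have : Countable {α : EuclideanSpace ℝ (Fin d) // α ∈ A ∧ R ≤ ‖α‖} :=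
    (hA.countable.mono fun _ hα => hα.1).to_subtype
  have hF : AEMeasurable F volume := (hf.1.aemeasurable.abs.pow_const p).ennreal_ofReal
  have hf_dil : MemLp (fun y => f (h • y)) (ENNReal.ofReal p) volume := by
    refine MemLp.comp_of_map (f := (h • ·)) ?_ (measurable_const_smul h).aemeasurable
    rw [Measure.map_addHaar_smul volume hh.ne']
    exact hf.smul_measure ENNReal.ofReal_ne_top
  have hdil : ∀ α, ∫⁻ y in closedBall α 1, F (h • y) = ENNReal.ofReal (h ^ d)⁻¹ * J α := by
    intro α
    rw [setLIntegral_comp_smul volume F hh.ne', smul_closedBall' hh.ne',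
      finrank_euclideanSpace_fin, Real.norm_of_nonneg hh.le, mul_one, abs_of_pos (by positivity)]
  have hterm : ∀ α : {α : EuclideanSpace ℝ (Fin d) // α ∈ A ∧ R ≤ ‖α‖},
      ENNReal.ofReal (|S α (fun y => f (h • y))| ^ p) ≤ c * (ENNReal.ofReal (h ^ d)⁻¹ * J α) := by
    intro α
    have hint : IntegrableOn (fun y => f (h • y)) (closedBall (α : EuclideanSpace ℝ (Fin d)) 1) :=
      (hf_dil.locallyIntegrable (ENNReal.one_le_ofReal.2 hp)).integrableOn_isCompact
        (isCompact_closedBall _ _)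
    have hbound := ofReal_abs_rpow_le_of_abs_le_mul_setIntegral hint hp hC (hS α α.2.1 _ hint)
    rwa [Measure.addHaar_closedBall_center, hdil] at hbound
  have hoverlap : ∀ z, {α : {α : EuclideanSpace ℝ (Fin d) // α ∈ A ∧ R ≤ ‖α‖} |
      z ∈ closedBall (h • (α : EuclideanSpace ℝ (Fin d))) h}.encard
        ≤ ENNReal.ofReal (unitBallCountBound d c₀ C₁) := by
    intro z
    refine le_trans ?_ (hA.encard_closedBall_one_le hd (h⁻¹ • z))
    have hmaps : MapsTo Subtype.val
        {α : {α : EuclideanSpace ℝ (Fin d) // α ∈ A ∧ R ≤ ‖α‖} |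
          z ∈ closedBall (h • (α : EuclideanSpace ℝ (Fin d))) h}
        {α ∈ A | dist (h⁻¹ • z) α ≤ 1} := by
      intro α hα
      refine ⟨α.2.1, ?_⟩
      calc dist (h⁻¹ • z) α = dist (h⁻¹ • z) (h⁻¹ • h • (α : EuclideanSpace ℝ (Fin d))) := by
            rw [inv_smul_smul₀ hh.ne']
        _ = h⁻¹ * dist z (h • (α : EuclideanSpace ℝ (Fin d))) := by
            rw [dist_smul₀, norm_inv, Real.norm_of_nonneg hh.le]
        _ ≤ h⁻¹ * h := by gcongr; exact mem_closedBall.1 hα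
        _ = 1 := inv_mul_cancel₀ hh.ne'
    exact_mod_cast encard_le_encard_of_injOn hmaps Subtype.val_injective.injOn
  have hsum := tsum_setLIntegral_le_of_encard_le (F := F) (μ := volume)
    (fun _ => measurableSet_closedBall) (measurableSet_le measurable_const measurable_norm)
    (fun α => closedBall_smul_subset_setOf_le_norm hh hR α.2.2) hoverlap hF
  have hone : ENNReal.ofReal (h ^ (d : ℝ)) * ENNReal.ofReal (h ^ d)⁻¹ = 1 := by
    rw [Real.rpow_natCast, ← ENNReal.ofReal_mul (by positivity),
      mul_inv_cancel₀ (by positivity), ENNReal.ofReal_one]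
  calc ENNReal.ofReal (h ^ (d : ℝ)) *
        ∑' α : {α : EuclideanSpace ℝ (Fin d) // α ∈ A ∧ R ≤ ‖α‖},
          ENNReal.ofReal (|S α (fun y => f (h • y))| ^ p)
      ≤ ENNReal.ofReal (h ^ (d : ℝ)) *
          ∑' α : {α : EuclideanSpace ℝ (Fin d) // α ∈ A ∧ R ≤ ‖α‖},
            c * (ENNReal.ofReal (h ^ d)⁻¹ * J α) :=
        mul_le_mul_right (ENNReal.tsum_le_tsum hterm) _
    _ = c * (ENNReal.ofReal (h ^ (d : ℝ)) * ENNReal.ofReal (h ^ d)⁻¹) *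
          ∑' α : {α : EuclideanSpace ℝ (Fin d) // α ∈ A ∧ R ≤ ‖α‖}, J α := by
        rw [ENNReal.tsum_mul_left, ENNReal.tsum_mul_left]
        ring
    _ ≤ c * (ENNReal.ofReal (unitBallCountBound d c₀ C₁) *
          ∫⁻ z in {z | R * h / 2 ≤ ‖z‖}, F z) := by
        rw [hone, mul_one]
        exact mul_le_mul_right hsum c
    _ = _ := (mul_assoc _ _ _).symm

end QuasiUniform

theorem mul_half_rpow_neg_rpow {c B : ℝ} (hc : 0 ≤ c) (hB : 0 ≤ B) (a p : ℝ) :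
    (c * (B / 2) ^ (-a)) ^ p = 2 ^ (a * p) * c ^ p * B ^ (-(a * p)) := by
  rw [Real.mul_rpow hc (by positivity), ← Real.rpow_mul (by positivity),
    Real.div_rpow hB zero_le_two, neg_mul, Real.rpow_neg zero_le_two, div_inv_eq_mul]
  ring

theorem stmt12_general (d : ℕ) (hd : 0 < d) (p a C c₀ C₁ : ℝ) (hp : 1 ≤ p)
    (hC : 0 < C) :
    ∃ C' : ℝ, 0 < C' ∧
      ∀ A : Set (EuclideanSpace ℝ (Fin d)), QuasiUniform A c₀ C₁ →
      ∀ S : EuclideanSpace ℝ (Fin d) → (EuclideanSpace ℝ (Fin d) → ℝ) → ℝ,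
        (∀ α ∈ A, ∀ g : EuclideanSpace ℝ (Fin d) → ℝ, IntegrableOn g (closedBall α 1) →
          |S α g| ≤ C * ∫ y in closedBall α 1, |g y|) →
      ∀ f : EuclideanSpace ℝ (Fin d) → ℝ, MemLp f (ENNReal.ofReal p) volume →
      ∀ C₁f : ℝ, 0 < C₁f →
        (∀ M : ℝ, 1 ≤ M →
          ∫⁻ x in {x : EuclideanSpace ℝ (Fin d) | M ≤ ‖x‖}, ENNReal.ofReal (|f x| ^ p) ≤
            ENNReal.ofReal ((C₁f * M ^ (-a)) ^ p)) →
      ∀ (h : ℝ) (n : ℕ), 0 < h → h < 1 → 2 ≤ (n : ℝ) ^ ((d : ℝ)⁻¹) * h →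
        ENNReal.ofReal (h ^ (d : ℝ)) *
            ∑' α : {α : EuclideanSpace ℝ (Fin d) // α ∈ A ∧ (n : ℝ) ^ ((d : ℝ)⁻¹) ≤ ‖α‖},
              ENNReal.ofReal (|S α (fun y => f (h • y))| ^ p)
          ≤ ENNReal.ofReal (C' * C₁f ^ p * ((n : ℝ) ^ ((d : ℝ)⁻¹) * h) ^ (-(a * p))) := by
  set W := volume.real (closedBall (0 : EuclideanSpace ℝ (Fin d)) 1)
  set κ := max (unitBallCountBound d c₀ C₁) 1
  have hW : 0 < W := ENNReal.toReal_pos (measure_closedBall_pos volume 0 one_pos).ne'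
    measure_closedBall_lt_top.ne
  refine ⟨C ^ p * W ^ (p - 1) * κ * 2 ^ (a * p), by positivity, ?_⟩
  intro A hA S hS f hf C₁f hC₁f htail h n hh hh1 hRh
  set R := (n : ℝ) ^ ((d : ℝ)⁻¹)
  have hR : 2 ≤ R := by nlinarith
  refine (hA.tsum_rpow_le hd hp hC.le hS hf hh hR).trans ?_
  calc _ ≤ ENNReal.ofReal (C ^ p) * ENNReal.ofReal (W ^ (p - 1)) * ENNReal.ofReal κ *
        ENNReal.ofReal ((C₁f * (R * h / 2) ^ (-a)) ^ p) := by
        rw [← ENNReal.ofReal_rpow_of_nonneg hW.le (by linarith),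
          ofReal_measureReal measure_closedBall_lt_top.ne]
        gcongr
        · exact le_max_left _ _
        · exact htail _ (by linarith)
    _ = _ := by
        rw [mul_half_rpow_neg_rpow hC₁f.le (by positivity), ← ENNReal.ofReal_mul (by positivity),
          ← ENNReal.ofReal_mul (by positivity), ← ENNReal.ofReal_mul (by positivity)]
        congr 1
        ring

theorem stmt12 (d : ℕ) (hd : 0 < d) (p a C c₀ C₁ : ℝ) (hp : 1 ≤ p) (ha : 0 ≤ a)
    (hC : 0 < C) :
    ∃ C' : ℝ, 0 < C' ∧
      ∀ A : Set (EuclideanSpace ℝ (Fin d)), QuasiUniform A c₀ C₁ →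
      ∀ S : EuclideanSpace ℝ (Fin d) → (EuclideanSpace ℝ (Fin d) → ℝ) → ℝ,
        (∀ α ∈ A, ∀ g : EuclideanSpace ℝ (Fin d) → ℝ, IntegrableOn g (closedBall α 1) →
          |S α g| ≤ C * ∫ y in closedBall α 1, |g y|) →
      ∀ f : EuclideanSpace ℝ (Fin d) → ℝ, MemLp f (ENNReal.ofReal p) volume →
      ∀ C₁f : ℝ, 0 < C₁f →
        (∀ M : ℝ, 1 ≤ M →
          ∫⁻ x in {x : EuclideanSpace ℝ (Fin d) | M ≤ ‖x‖}, ENNReal.ofReal (|f x| ^ p) ≤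
            ENNReal.ofReal ((C₁f * M ^ (-a)) ^ p)) →
      ∀ (h : ℝ) (n : ℕ), 0 < h → h < 1 → 2 ≤ (n : ℝ) ^ ((d : ℝ)⁻¹) * h →
        ENNReal.ofReal (h ^ (d : ℝ)) *
            ∑' α : {α : EuclideanSpace ℝ (Fin d) // α ∈ A ∧ (n : ℝ) ^ ((d : ℝ)⁻¹) ≤ ‖α‖},
              ENNReal.ofReal (|S α (fun y => f (h • y))| ^ p)
          ≤ ENNReal.ofReal (C' * C₁f ^ p * ((n : ℝ) ^ ((d : ℝ)⁻¹) * h) ^ (-(a * p))) :=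
  stmt12_general d hd p a C c₀ C₁ hp hC
end

section
/- Let d ≥ 1, m_2 > 0, and h ∈ (0,1). For x ∈ ℝ^d and j ≥ 0, suppose coefficients b_j ≥ 0 satisfy b_j ≤ 2^{−j m_2} (2^j h)^{r−d} ∫_{B_{2^{j+3} h}(x)} g(z) dz for a nonnegative locally integrable g and real r with r < m_2. Then ∑_{j=0}^∞ b_j ≤ C h^r (g ∗ Ψ_h)(x), where Ψ(z) = ‖z‖^{−d+1}(1+‖z‖)^{−1−m_2+r} (in fact one may replace ‖z‖^{−d+1} by ‖z‖^{−d} capped appropriately), Ψ_h(·) = h^{−d}Ψ(·/h), and C depends only on d, r, m_2. -/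
/-!
With `t = m₂ + d - r` the hypothesis reads `b j ≤ 2^(-j t) h^(r-d) ∫_{B(x, 2^(j+3) h)} g`.
Summing over `j` and exchanging sum and integral, a point `z` with `s = ‖x - z‖ / h` only sees the
dyadic scales with `s ≤ 2^(j+3)`; the geometric tail starting at the first such scale is
`≲ (1 + s)^(-t)`, and since `d ≥ 1`,
`(1 + s)^(-t) = (1 + s)^(1-d) (1 + s)^(-1-m₂+r) ≤ s^(1-d) (1 + s)^(-1-m₂+r)`.
-/

open MeasureTheory Metric
open scoped ENNReal

theorem ENNReal.tsum_ite_pow_le_pow_mul {q : ℝ≥0∞} {P : ℕ → Prop} [DecidablePred P] {j₀ : ℕ}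
    (hP : ∀ j, P j → j₀ ≤ j) :
    ∑' j, (if P j then q ^ j else 0) ≤ q ^ j₀ * (1 - q)⁻¹ := by
  rw [← ENNReal.summable.sum_add_tsum_nat_add' (k := j₀),
    Finset.sum_eq_zero fun j hj => if_neg fun hPj => (hP j hPj).not_gt (Finset.mem_range.1 hj),
    zero_add]
  calc ∑' j, (if P (j + j₀) then q ^ (j + j₀) else 0)
      ≤ ∑' j, q ^ j₀ * q ^ j :=
        ENNReal.tsum_le_tsum fun j => by split_ifs <;> simp [pow_add, mul_comm]
    _ = q ^ j₀ * (1 - q)⁻¹ := by rw [ENNReal.tsum_mul_left, ENNReal.tsum_geometric]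

theorem tsum_mul_setLIntegral_eq {α ι : Type*} [Countable ι] [MeasurableSpace α] {μ : Measure α}
    {f : α → ℝ≥0∞} (hf : AEMeasurable f μ) {s : ι → Set α} (hs : ∀ j, MeasurableSet (s j))
    (w : ι → ℝ≥0∞) :
    ∑' j, w j * ∫⁻ z in s j, f z ∂μ = ∫⁻ z, (∑' j, (s j).indicator (fun _ => w j) z) * f z ∂μ := by
  have hterm : ∀ j, w j * ∫⁻ z in s j, f z ∂μ =
      ∫⁻ z, (s j).indicator (fun _ => w j) z * f z ∂μ := fun j => by
    rw [← lintegral_const_mul'' _ hf.restrict, ← lintegral_indicator (hs j)]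
    congr 1 with z
    by_cases hz : z ∈ s j <;> simp [hz]
  simp_rw [hterm, ← ENNReal.tsum_mul_right]
  exact (lintegral_tsum fun j => (aemeasurable_const.indicator (hs j)).mul hf).symm

theorem one_add_rpow_add_le {s a b : ℝ} (hs : 0 < s) (ha : a ≤ 0) :
    (1 + s) ^ (a + b) ≤ s ^ a * (1 + s) ^ b := by
  rw [Real.rpow_add (by linarith)]
  exact mul_le_mul_of_nonneg_right (Real.rpow_le_rpow_of_nonpos hs (by linarith) ha)
    (by positivity)

theorem two_rpow_weight_eq {h : ℝ} (hh : 0 ≤ h) (m r d : ℝ) (j : ℕ) :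
    (2 : ℝ) ^ (-(j : ℝ) * m) * ((2 : ℝ) ^ (j : ℝ) * h) ^ (r - d) =
      ((2 : ℝ) ^ (-(m + d - r))) ^ j * h ^ (r - d) := by
  rw [Real.mul_rpow (by positivity) hh, ← Real.rpow_mul_natCast zero_le_two,
    ← Real.rpow_mul zero_le_two, ← mul_assoc, ← Real.rpow_add two_pos]
  ring_nf

theorem tsum_dyadic_tail_le {t s : ℝ} (ht : 0 < t) (hs : 0 ≤ s) :
    ∑' j : ℕ, (if s ≤ (2 : ℝ) ^ ((j : ℝ) + 3) then ENNReal.ofReal ((2 : ℝ) ^ (-t)) ^ j else 0) ≤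
      ENNReal.ofReal (16 ^ t / (1 - 2 ^ (-t)) * (1 + s) ^ (-t)) := by
  classical
  have h2 : ∀ j : ℕ, (2 : ℝ) ^ ((j : ℝ) + 3) = 8 * 2 ^ j := fun j => by
    rw [Real.rpow_add two_pos, Real.rpow_natCast, mul_comm]; norm_num
  have hex : ∃ j : ℕ, s ≤ (2 : ℝ) ^ ((j : ℝ) + 3) := by
    obtain ⟨j, hj⟩ := pow_unbounded_of_one_lt s one_lt_two
    exact ⟨j, by rw [h2]; linarith⟩
  set q : ℝ := 2 ^ (-t)
  have hq : q < 1 := Real.rpow_lt_one_of_one_lt_of_neg one_lt_two (neg_neg_of_pos ht)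
  set j₀ := Nat.find hex
  have hj₀ : 1 + s ≤ 16 * 2 ^ j₀ := by
    have := Nat.find_spec hex
    rw [h2] at this
    linarith [one_le_pow₀ (M₀ := ℝ) one_le_two (n := j₀)]
  have hqj₀ : q ^ j₀ ≤ 16 ^ t * (1 + s) ^ (-t) := calc
    q ^ j₀ = 16 ^ t * (16 * 2 ^ j₀) ^ (-t) := by
      rw [Real.mul_rpow (by norm_num) (by positivity), ← mul_assoc, Real.rpow_neg (by norm_num),
        mul_inv_cancel₀ (by positivity), one_mul, ← Real.rpow_natCast_mul zero_le_two,
        mul_comm, Real.rpow_mul_natCast zero_le_two]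
    _ ≤ 16 ^ t * (1 + s) ^ (-t) := mul_le_mul_of_nonneg_left
      (Real.rpow_le_rpow_of_nonpos (by positivity) hj₀ (neg_nonpos.2 ht.le)) (by positivity)
  calc _ ≤ ENNReal.ofReal q ^ j₀ * (1 - ENNReal.ofReal q)⁻¹ :=
        ENNReal.tsum_ite_pow_le_pow_mul fun j hj => Nat.find_min' hex hj
    _ = ENNReal.ofReal (q ^ j₀ / (1 - q)) := by
      rw [div_eq_mul_inv, ENNReal.ofReal_mul (by positivity), ENNReal.ofReal_pow (by positivity),
        ENNReal.ofReal_inv_of_pos (by linarith), ENNReal.ofReal_sub _ (by positivity),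
        ENNReal.ofReal_one]
    _ ≤ _ := by
      rw [div_mul_eq_mul_div]
      exact ENNReal.ofReal_le_ofReal (div_le_div_of_nonneg_right hqj₀ (by linarith))

theorem tsum_indicator_closedBall_dyadic_le {E : Type*} [SeminormedAddCommGroup E]
    [NormedSpace ℝ E] {t h : ℝ} (ht : 0 < t) (hh : 0 < h) (x z : E) :
    ∑' j : ℕ, (closedBall x ((2 : ℝ) ^ ((j : ℝ) + 3) * h)).indicator
        (fun _ => ENNReal.ofReal ((2 : ℝ) ^ (-t)) ^ j) z ≤
      ENNReal.ofReal (16 ^ t / (1 - 2 ^ (-t)) * (1 + ‖h⁻¹ • (x - z)‖) ^ (-t)) := by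
  have hmem : ∀ j : ℕ, z ∈ closedBall x ((2 : ℝ) ^ ((j : ℝ) + 3) * h) ↔
      ‖h⁻¹ • (x - z)‖ ≤ 2 ^ ((j : ℝ) + 3) := fun j => by
    rw [norm_smul, Real.norm_of_nonneg (inv_nonneg.2 hh.le), inv_mul_eq_div, mem_closedBall,
      dist_comm, dist_eq_norm, div_le_iff₀ hh]
  classical
  simp only [Set.indicator_apply, hmem]
  exact tsum_dyadic_tail_le ht (norm_nonneg _)

theorem tsum_indicator_closedBall_dyadic_le_kernel {E : Type*} [NormedAddCommGroup E]
    [NormedSpace ℝ E] {d m r h : ℝ} (hd : 1 ≤ d) (hr : r < m) (hh : 0 < h) {x z : E}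
    (hz : z ≠ x) :
    ∑' j : ℕ, (closedBall x ((2 : ℝ) ^ ((j : ℝ) + 3) * h)).indicator
        (fun _ => ENNReal.ofReal ((2 : ℝ) ^ (-(m + d - r))) ^ j) z ≤
      ENNReal.ofReal (16 ^ (m + d - r) / (1 - 2 ^ (-(m + d - r))) *
        (‖h⁻¹ • (x - z)‖ ^ (-d + 1) * (1 + ‖h⁻¹ • (x - z)‖) ^ (-1 - m + r))) := by
  have hs : 0 < ‖h⁻¹ • (x - z)‖ :=
    norm_pos_iff.2 (smul_ne_zero (inv_ne_zero hh.ne') (sub_ne_zero.2 hz.symm))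
  have hq : (2 : ℝ) ^ (-(m + d - r)) < 1 :=
    Real.rpow_lt_one_of_one_lt_of_neg one_lt_two (by linarith)
  refine (tsum_indicator_closedBall_dyadic_le (by linarith) hh x z).trans
    (ENNReal.ofReal_le_ofReal (mul_le_mul_of_nonneg_left ?_ (div_nonneg (by positivity)
      (by linarith))))
  rw [show -(m + d - r) = (-d + 1) + (-1 - m + r) by ring]
  exact one_add_rpow_add_le hs (by linarith)

theorem stmt17_general (d : ℕ) (hd : 0 < d) (m₂ r : ℝ) (hr : r < m₂) :
    ∃ C : ℝ, 0 < C ∧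
      ∀ h : ℝ, 0 < h → h < 1 →
      ∀ g : EuclideanSpace ℝ (Fin d) → ℝ, (∀ z, 0 ≤ g z) → LocallyIntegrable g volume →
      ∀ x : EuclideanSpace ℝ (Fin d), ∀ b : ℕ → ℝ, (∀ j, 0 ≤ b j) →
        (∀ j : ℕ, ENNReal.ofReal (b j) ≤
          ENNReal.ofReal ((2 : ℝ) ^ (-(j : ℝ) * m₂) * ((2 : ℝ) ^ (j : ℝ) * h) ^ (r - d)) *
            ∫⁻ z in closedBall x ((2 : ℝ) ^ ((j : ℝ) + 3) * h), ENNReal.ofReal (g z)) →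
        ∑' j, ENNReal.ofReal (b j) ≤
          ENNReal.ofReal (C * h ^ r) *
            ∫⁻ y, ENNReal.ofReal (g (x - y)) *
              ENNReal.ofReal (h ^ (-(d : ℝ)) *
                (‖h⁻¹ • y‖ ^ (-(d : ℝ) + 1) * (1 + ‖h⁻¹ • y‖) ^ (-1 - m₂ + r))) := by
  have hd1 : (1 : ℝ) ≤ d := by exact_mod_cast hd
  set t := m₂ + d - r with ht
  have hq : (2 : ℝ) ^ (-t) < 1 := Real.rpow_lt_one_of_one_lt_of_neg one_lt_two (by linarith)
  set C : ℝ := 16 ^ t / (1 - 2 ^ (-t))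
  refine ⟨C, div_pos (by positivity) (by linarith), ?_⟩
  intro h hh _ g _ hg x b _ hb
  -- makes the space nontrivial, so that `volume` has no atoms
  have : Nonempty (Fin d) := ⟨⟨0, hd⟩⟩
  set f : EuclideanSpace ℝ (Fin d) → ℝ≥0∞ := fun z => ENNReal.ofReal (g z)
  set c := ENNReal.ofReal (h ^ (r - d))
  set B : ℕ → Set (EuclideanSpace ℝ (Fin d)) := fun j => closedBall x ((2 : ℝ) ^ ((j : ℝ) + 3) * h)
  set K : EuclideanSpace ℝ (Fin d) → ℝ := fun y =>
    ‖h⁻¹ • y‖ ^ (-(d : ℝ) + 1) * (1 + ‖h⁻¹ • y‖) ^ (-1 - m₂ + r)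
  have hpt : ∀ z, z ≠ x →
      (∑' j, (B j).indicator (fun _ => ENNReal.ofReal ((2 : ℝ) ^ (-t)) ^ j) z) * (c * f z) ≤
        ENNReal.ofReal (C * h ^ r) * (f z * ENNReal.ofReal (h ^ (-(d : ℝ)) * K (x - z))) := by
    intro z hz
    calc _ ≤ ENNReal.ofReal (C * K (x - z)) * (c * f z) := by
          gcongr
          exact tsum_indicator_closedBall_dyadic_le_kernel hd1 hr hh hz
      _ = _ := by
          simp only [c, show r - d = r + -(d : ℝ) by ring, Real.rpow_add hh,
            ENNReal.ofReal_mul (by positivity : (0 : ℝ) ≤ C),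
            ENNReal.ofReal_mul (Real.rpow_nonneg hh.le _)]
          ring
  calc ∑' j, ENNReal.ofReal (b j)
      ≤ ∑' j, ENNReal.ofReal ((2 : ℝ) ^ (-t)) ^ j * ∫⁻ z in B j, c * f z :=
        ENNReal.tsum_le_tsum fun j => (hb j).trans_eq <| by
          rw [two_rpow_weight_eq hh.le, ENNReal.ofReal_mul (by positivity),
            ENNReal.ofReal_pow (by positivity), lintegral_const_mul' _ _ ENNReal.ofReal_ne_top,
            mul_assoc]
    _ = ∫⁻ z, (∑' j, (B j).indicator (fun _ => ENNReal.ofReal ((2 : ℝ) ^ (-t)) ^ j) z) *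
          (c * f z) :=
        tsum_mul_setLIntegral_eq (hg.aestronglyMeasurable.aemeasurable.ennreal_ofReal.const_mul c)
          (fun _ => measurableSet_closedBall) _
    _ ≤ ∫⁻ z, ENNReal.ofReal (C * h ^ r) * (f z * ENNReal.ofReal (h ^ (-(d : ℝ)) * K (x - z))) :=
        lintegral_mono_ae ((Measure.ae_ne volume x).mono hpt)
    _ = _ := by
      rw [lintegral_const_mul' _ _ ENNReal.ofReal_ne_top, ← lintegral_sub_left_eq_self _ x]
      simp only [sub_sub_cancel, f, K]

theorem stmt17 (d : ℕ) (hd : 0 < d) (m₂ r : ℝ) (hm : 0 < m₂) (hr : r < m₂) :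
    ∃ C : ℝ, 0 < C ∧
      ∀ h : ℝ, 0 < h → h < 1 →
      ∀ g : EuclideanSpace ℝ (Fin d) → ℝ, (∀ z, 0 ≤ g z) → LocallyIntegrable g volume →
      ∀ x : EuclideanSpace ℝ (Fin d), ∀ b : ℕ → ℝ, (∀ j, 0 ≤ b j) →
        (∀ j : ℕ, ENNReal.ofReal (b j) ≤
          ENNReal.ofReal ((2 : ℝ) ^ (-(j : ℝ) * m₂) * ((2 : ℝ) ^ (j : ℝ) * h) ^ (r - d)) *
            ∫⁻ z in closedBall x ((2 : ℝ) ^ ((j : ℝ) + 3) * h), ENNReal.ofReal (g z)) →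
        ∑' j, ENNReal.ofReal (b j) ≤
          ENNReal.ofReal (C * h ^ r) *
            ∫⁻ y, ENNReal.ofReal (g (x - y)) *
              ENNReal.ofReal (h ^ (-(d : ℝ)) *
                (‖h⁻¹ • y‖ ^ (-(d : ℝ) + 1) * (1 + ‖h⁻¹ • y‖) ^ (-1 - m₂ + r))) :=
  stmt17_general d hd m₂ r hr
end
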